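/- The projection of a stable matching of the translated instance is a matching: let I be an SMTI-1TM instance, I' its translated SMI instance, and M' a stable matching of I'. Then the projection M = {(m_i,w_j) : (a_i,s_j) ∈ M' or (a_i,t_j) ∈ M'} is a matching of I, i.e., every pair in M is mutually acceptable in I and no man m_i and no woman w_j appears in more than one pair of M. -/

import Mathlib

/-- An instance of the stable marriage problem with ties and incomplete lists (SMTI),
with men of type `α` and women of type `β`.  Each person's preference list is
represented by a rank function: `mpref m w = none` means woman `w` is unacceptable
to man `m`, and `mpref m w = some r` means `w` is acceptable with rank `r`
(smaller rank = more preferred; equal ranks = a tie).  This encodes exactly a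
total preorder on the set of acceptable partners. -/
structure SMInst (α β : Type) where
  mpref : α → β → Option ℕ
  wpref : β → α → Option ℕ

namespace SMInst

variable {α β : Type}

/-- Woman `w` is acceptable to man `m`. -/
def mAcc (I : SMInst α β) (m : α) (w : β) : Prop := (I.mpref m w).isSome

/-- Man `m` is acceptable to woman `w`. -/
def wAcc (I : SMInst α β) (w : β) (m : α) : Prop := (I.wpref w m).isSome

/-- Man `m` strictly prefers woman `w` to woman `w'`. -/
def mPref (I : SMInst α β) (m : α) (w w' : β) : Prop :=
  ∃ r r', I.mpref m w = some r ∧ I.mpref m w' = some r' ∧ r < r'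

/-- Woman `w` strictly prefers man `m` to man `m'`. -/
def wPref (I : SMInst α β) (w : β) (m m' : α) : Prop :=
  ∃ r r', I.wpref w m = some r ∧ I.wpref w m' = some r' ∧ r < r'

/-- `M` is a matching of `I`: all pairs mutually acceptable and no person in two pairs. -/
def IsMatching (I : SMInst α β) (M : Finset (α × β)) : Prop :=
  (∀ p ∈ M, I.mAcc p.1 p.2 ∧ I.wAcc p.2 p.1) ∧
  (∀ p ∈ M, ∀ q ∈ M, p.1 = q.1 → p = q) ∧
  (∀ p ∈ M, ∀ q ∈ M, p.2 = q.2 → p = q)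

/-- Man `m` is single (unmatched) in `M`. -/
def mSingle (M : Finset (α × β)) (m : α) : Prop := ∀ w, (m, w) ∉ M

/-- Woman `w` is single (unmatched) in `M`. -/
def wSingle (M : Finset (α × β)) (w : β) : Prop := ∀ m, (m, w) ∉ M

/-- `(m, w)` blocks `M` in instance `I`. -/
def Blocks (I : SMInst α β) (M : Finset (α × β)) (m : α) (w : β) : Prop :=
  I.mAcc m w ∧ I.wAcc w m ∧
  (mSingle M m ∨ ∃ w', (m, w') ∈ M ∧ I.mPref m w w') ∧
  (wSingle M w ∨ ∃ m', (m', w) ∈ M ∧ I.wPref w m m')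

/-- `M` is a (weakly) stable matching of `I`. -/
def IsStable (I : SMInst α β) (M : Finset (α × β)) : Prop :=
  I.IsMatching M ∧ ∀ m w, ¬ I.Blocks M m w

/-- Man `m` prefers matching `M'` to matching `M`, with respect to his list in `I`:
he is matched in `M'` to an acceptable partner, and he is either single in `M`
or strictly prefers his `M'`-partner to his `M`-partner. -/
def mPrefMatching (I : SMInst α β) (m : α) (M' M : Finset (α × β)) : Prop :=
  ∃ w, (m, w) ∈ M' ∧ I.mAcc m w ∧
    (mSingle M m ∨ ∃ w', (m, w') ∈ M ∧ I.mPref m w w')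

/-- Woman `w` prefers matching `M'` to matching `M`, with respect to her list in `I`. -/
def wPrefMatching (I : SMInst α β) (w : β) (M' M : Finset (α × β)) : Prop :=
  ∃ m, (m, w) ∈ M' ∧ I.wAcc w m ∧
    (wSingle M w ∨ ∃ m', (m', w) ∈ M ∧ I.wPref w m m')

/-- `I` and `I'` differ only in man `m`'s preference list. -/
def mDiffOnly (I I' : SMInst α β) (m : α) : Prop :=
  I.wpref = I'.wpref ∧ ∀ m', m' ≠ m → I.mpref m' = I'.mpref m'

/-- `I` and `I'` differ only in woman `w`'s preference list. -/
def wDiffOnly (I I' : SMInst α β) (w : β) : Prop :=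
  I.mpref = I'.mpref ∧ ∀ w', w' ≠ w → I.wpref w' = I'.wpref w'

/-- Men's lists contain no ties. -/
def MStrict (I : SMInst α β) : Prop :=
  ∀ m w w', I.mpref m w = I.mpref m w' → I.mAcc m w → w = w'

/-- Women's lists contain no ties. -/
def WStrict (I : SMInst α β) : Prop :=
  ∀ w m m', I.wpref w m = I.wpref w m' → I.wAcc w m → m = m'

/-- `I` is an SMI instance: no ties at all (all lists strictly ordered). -/
def NoTies (I : SMInst α β) : Prop := I.MStrict ∧ I.WStrict

/-- `I` is an SMTI-1TM instance: ties may occur only in men's lists,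
i.e. women's lists are strictly ordered. -/
def OneTM (I : SMInst α β) : Prop := I.WStrict

/-- `I'` is obtained from `I` by breaking ties: same acceptable sets, and every
strict preference of `I` is preserved in `I'` (so each person's list in `I'` is a
linear extension of the corresponding total preorder in `I`). -/
def Refines (I I' : SMInst α β) : Prop :=
  (∀ m w, I.mAcc m w ↔ I'.mAcc m w) ∧
  (∀ w m, I.wAcc w m ↔ I'.wAcc w m) ∧
  (∀ m w w', I.mPref m w w' → I'.mPref m w w') ∧
  (∀ w m m', I.wPref w m m' → I'.wPref w m m')

end SMInst

namespace SMInst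

/-- The translation of an SMTI-1TM instance `I` (with men/women indexed by `Fin n`)
into an SMI instance `I'`.  Men of `I'`: `Sum.inl i` is `a_i`, `Sum.inr j` is `b_j`.
Women of `I'`: `Sum.inl j` is `s_j`, `Sum.inr j` is `t_j`.
The strict list of `a_i` replaces each tie `(w_{j_1} … w_{j_k})` (indices increasing)
of `m_i`'s list by the strict segment `t_{j_1} … t_{j_k} s_{j_1} … s_{j_k}`;
`b_j`'s list is `s_j t_j`; `s_j`'s list is `Q(w_j)` followed by `b_j`; and
`t_j`'s list is `b_j` followed by `Q(w_j)`, where `Q(w_j)` is `w_j`'s list with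
each `m_i` replaced by `a_i`. -/
def translate {n : ℕ} (I : SMInst (Fin n) (Fin n)) :
    SMInst (Fin n ⊕ Fin n) (Fin n ⊕ Fin n) where
  mpref := fun a w =>
    match a, w with
    | Sum.inl i, Sum.inl j =>
        (I.mpref i j).map fun r =>
          2 * n * r + n +
            (Finset.univ.filter fun j' : Fin n => I.mpref i j' = some r ∧ j' < j).card
    | Sum.inl i, Sum.inr j =>
        (I.mpref i j).map fun r =>
          2 * n * r +
            (Finset.univ.filter fun j' : Fin n => I.mpref i j' = some r ∧ j' < j).card
    | Sum.inr i, Sum.inl j => if j = i then some 0 else none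
    | Sum.inr i, Sum.inr j => if j = i then some 1 else none
  wpref := fun w a =>
    match w, a with
    | Sum.inl j, Sum.inl i => I.wpref j i
    | Sum.inl j, Sum.inr i =>
        if i = j then some ((Finset.univ.sup fun i' : Fin n => (I.wpref j i').getD 0) + 1)
        else none
    | Sum.inr j, Sum.inl i => (I.wpref j i).map (· + 1)
    | Sum.inr j, Sum.inr i => if i = j then some 0 else none

/-- The projection of a matching `M'` of the translated instance back to the
original instance: `M = {(m_i, w_j) : (a_i, s_j) ∈ M' ∨ (a_i, t_j) ∈ M'}`. -/
def projectM {n : ℕ} (M' : Finset ((Fin n ⊕ Fin n) × (Fin n ⊕ Fin n))) :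
    Finset (Fin n × Fin n) :=
  Finset.univ.filter fun p =>
    (Sum.inl p.1, Sum.inl p.2) ∈ M' ∨ (Sum.inl p.1, Sum.inr p.2) ∈ M'

end SMInst


namespace SMInst

variable {α β : Type}

theorem IsMatching.acc {I : SMInst α β} {M : Finset (α × β)} (hM : I.IsMatching M)
    {m : α} {w : β} (h : (m, w) ∈ M) : I.mAcc m w ∧ I.wAcc w m :=
  hM.1 _ h

theorem IsMatching.eq_of_mem_of_mem_left {I : SMInst α β} {M : Finset (α × β)}
    (hM : I.IsMatching M) {m : α} {w w' : β} (h : (m, w) ∈ M) (h' : (m, w') ∈ M) :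
    w = w' :=
  congrArg Prod.snd (hM.2.1 _ h _ h' rfl)

theorem IsMatching.eq_of_mem_of_mem_right {I : SMInst α β} {M : Finset (α × β)}
    (hM : I.IsMatching M) {m m' : α} {w : β} (h : (m, w) ∈ M) (h' : (m', w) ∈ M) :
    m = m' :=
  congrArg Prod.fst (hM.2.2 _ h _ h' rfl)

theorem IsStable.not_mSingle {I : SMInst α β} {M : Finset (α × β)} (hM : I.IsStable M)
    {m m' : α} {w : β} (hmw : I.mAcc m w) (hwm : I.wAcc w m) (hm' : (m', w) ∈ M)
    (hpref : I.wPref w m m') : ¬ mSingle M m :=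
  fun hsingle => hM.2 m w ⟨hmw, hwm, Or.inl hsingle, Or.inr ⟨m', hm', hpref⟩⟩

theorem mem_projectM {n : ℕ} {M' : Finset ((Fin n ⊕ Fin n) × (Fin n ⊕ Fin n))}
    {i j : Fin n} :
    (i, j) ∈ projectM M' ↔ (Sum.inl i, Sum.inl j) ∈ M' ∨ (Sum.inl i, Sum.inr j) ∈ M' := by
  simp [projectM]

section translate

variable {n : ℕ} (I : SMInst (Fin n) (Fin n))

@[simp]
theorem translate_mAcc_inl_inl (i j : Fin n) :
    (translate I).mAcc (.inl i) (.inl j) ↔ I.mAcc i j := by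
  simp [translate, mAcc]

@[simp]
theorem translate_mAcc_inl_inr (i j : Fin n) :
    (translate I).mAcc (.inl i) (.inr j) ↔ I.mAcc i j := by
  simp [translate, mAcc]

@[simp]
theorem translate_wAcc_inl_inl (i j : Fin n) :
    (translate I).wAcc (.inl j) (.inl i) ↔ I.wAcc j i := by
  simp [translate, wAcc]

@[simp]
theorem translate_wAcc_inr_inl (i j : Fin n) :
    (translate I).wAcc (.inr j) (.inl i) ↔ I.wAcc j i := by
  simp [translate, wAcc]

theorem translate_mAcc_inr {j : Fin n} {w : Fin n ⊕ Fin n}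
    (h : (translate I).mAcc (.inr j) w) : w = .inl j ∨ w = .inr j := by
  rcases w with k | k <;> by_cases hk : k = j <;> simp_all [translate, mAcc]

theorem translate_wPref_inr_inr {i j : Fin n} (h : I.wAcc j i) :
    (translate I).wPref (.inr j) (.inr j) (.inl i) := by
  obtain ⟨r, hr⟩ := Option.isSome_iff_exists.mp h
  exact ⟨0, r + 1, by simp [translate], by simp [translate, hr], by omega⟩

variable {I} {M' : Finset ((Fin n ⊕ Fin n) × (Fin n ⊕ Fin n))}

/-- If `t_j` is matched to some `a_i`, then `b_j` must be matched (else `(b_j, t_j)`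
blocks), and his only other option is `s_j`. -/
theorem IsStable.translate_mem_inr_inl (hM' : (translate I).IsStable M') {i j : Fin n}
    (ht : (.inl i, .inr j) ∈ M') : (.inr j, .inl j) ∈ M' := by
  have hwAcc : I.wAcc j i := by simpa using (hM'.1.acc ht).2
  have hb : ¬ mSingle M' (.inr j) :=
    hM'.not_mSingle (by simp [translate, mAcc]) (by simp [translate, wAcc]) ht
      (translate_wPref_inr_inr I hwAcc)
  obtain ⟨w, hw⟩ := not_forall_not.mp hb
  rcases translate_mAcc_inr I (hM'.1.acc hw).1 with rfl | rfl
  · exact hw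
  · exact absurd (hM'.1.eq_of_mem_of_mem_right hw ht) Sum.inr_ne_inl

theorem IsStable.translate_not_mem_inl_inl_of_mem_inl_inr (hM' : (translate I).IsStable M')
    {i i' j : Fin n} (ht : (.inl i', .inr j) ∈ M') : (.inl i, .inl j) ∉ M' := fun hs =>
  Sum.inl_ne_inr (hM'.1.eq_of_mem_of_mem_right hs (hM'.translate_mem_inr_inl ht))

end translate

end SMInst

theorem projection_is_matching_general {n : ℕ}
    (I : SMInst (Fin n) (Fin n))
    (M' : Finset ((Fin n ⊕ Fin n) × (Fin n ⊕ Fin n)))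
    (hM' : (SMInst.translate I).IsStable M') :
    I.IsMatching (SMInst.projectM M') := by
  have hM := hM'.1
  refine ⟨?_, ?_, ?_⟩
  · rintro ⟨i, j⟩ hp
    rcases SMInst.mem_projectM.mp hp with h | h <;> simpa using hM.acc h
  · rintro ⟨i, j⟩ hp ⟨_, j'⟩ hq (rfl : i = _)
    rcases SMInst.mem_projectM.mp hp with h | h <;>
      rcases SMInst.mem_projectM.mp hq with h' | h' <;>
      simpa using hM.eq_of_mem_of_mem_left h h'
  · rintro ⟨i, j⟩ hp ⟨i', _⟩ hq (rfl : j = _)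
    rcases SMInst.mem_projectM.mp hp with h | h <;> rcases SMInst.mem_projectM.mp hq with h' | h'
    · simpa using hM.eq_of_mem_of_mem_right h h'
    · exact absurd h (hM'.translate_not_mem_inl_inl_of_mem_inl_inr h')
    · exact absurd h' (hM'.translate_not_mem_inl_inl_of_mem_inl_inr h)
    · simpa using hM.eq_of_mem_of_mem_right h h'

/-- The projection of a stable matching of the translated instance is a matching of
the original SMTI-1TM instance: every pair is mutually acceptable in `I` and no
person appears in more than one pair. -/
theorem projection_is_matching {n : ℕ}
    (I : SMInst (Fin n) (Fin n)) (h1tm : I.OneTM)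
    (M' : Finset ((Fin n ⊕ Fin n) × (Fin n ⊕ Fin n)))
    (hM' : (SMInst.translate I).IsStable M') :
    I.IsMatching (SMInst.projectM M') :=
  projection_is_matching_general I M' hM'
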